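/- In an optimal schedule, server types in a lane never change immediately: if ŷ_{t-1,k} > 0 and ŷ_{t,k} > 0, then ŷ_{t-1,k} = ŷ_{t,k}. -/

import Mathlib

open Finset

/-- A schedule `x` (where `x t j` is the number of active servers of type `j` at time `t`)
is feasible for horizon `T`, `d` server types with `m j` servers of type `j`, and job
volumes `lam`: all servers are off at time `0` and after time `T`, the demand is met,
and no more servers are used than available. -/
def Feasible (T d : ℕ) (m lam : ℕ → ℕ) (x : ℕ → ℕ → ℕ) : Prop :=
  (∀ j, x 0 j = 0) ∧
  (∀ t, T < t → ∀ j, x t j = 0) ∧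
  (∀ t ∈ Finset.Icc 1 T, lam t ≤ ∑ j ∈ Finset.Icc 1 d, x t j ∧ ∀ j, x t j ≤ m j)

/-- Total cost of a schedule: operating costs plus switching costs for powering up. -/
noncomputable def cost (T d : ℕ) (β l : ℕ → ℝ) (x : ℕ → ℕ → ℕ) : ℝ :=
  ∑ t ∈ Finset.Icc 1 T, ∑ j ∈ Finset.Icc 1 d,
    (l j * (x t j : ℝ) + β j * ((x t j - x (t - 1) j : ℕ) : ℝ))

/-- An optimal schedule: feasible and of minimum cost among feasible schedules. -/
def Optimal (T d : ℕ) (m lam : ℕ → ℕ) (β l : ℕ → ℝ) (x : ℕ → ℕ → ℕ) : Prop :=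
  Feasible T d m lam x ∧
  ∀ x', Feasible T d m lam x' → cost T d β l x ≤ cost T d β l x'

/-- The lane representation: `lane d x t k` is the server type serving lane `k`
at time `t` (largest `j ∈ [1,d]` with `∑_{j'=j}^{d} x t j' ≥ k`, else `0`). -/
noncomputable def lane (d : ℕ) (x : ℕ → ℕ → ℕ) (t k : ℕ) : ℕ :=
  sSup {j | j ∈ Finset.Icc 1 d ∧ k ≤ ∑ j' ∈ Finset.Icc j d, x t j'}

/-!
If lane `k` changes from type `a` to type `b ≠ a` between slots `t - 1` and `t`, the lane
counts show that some type `j₀` is powered up (if `a < b`) or down (if `b < a`) at the switch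
while a type `j₁ < j₀`, cheaper to switch but dearer to run, is running beside it. Move one
server from `j₁` to `j₀` on the maximal window of slots ending at `t - 1` (resp. starting at
`t`) on which `j₁` runs and `j₀` has spare capacity. This saves `l j₁ - l j₀` per slot. The
switching cost does not grow: at the switch the moved server replaces a `j₀` server that is
switched anyway, and at the far end of the window either `j₁` is off or `j₀` is at capacity,
so that with `0 ≤ β j₁ ≤ β j₀` every extra power-up is paid for by a saved one. This
contradicts optimality.
-/

def powerUps (T : ℕ) (y : ℕ → ℕ) : ℕ := ∑ s ∈ Icc 1 T, (y s - y (s - 1))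

def colCost (T : ℕ) (c b : ℝ) (y : ℕ → ℕ) : ℝ :=
  c * ∑ s ∈ Icc 1 T, (y s : ℝ) + b * powerUps T y

theorem cost_eq_sum_colCost (T d : ℕ) (β l : ℕ → ℝ) (x : ℕ → ℕ → ℕ) :
    cost T d β l x = ∑ j ∈ Icc 1 d, colCost T (l j) (β j) (fun s => x s j) := by
  simp only [cost, colCost, powerUps, Nat.cast_sum, mul_sum, ← sum_add_distrib]
  exact sum_comm

def raiseOn (u v : ℕ) (y : ℕ → ℕ) (s : ℕ) : ℕ := y s + if s ∈ Icc u v then 1 else 0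

def lowerOn (u v : ℕ) (y : ℕ → ℕ) (s : ℕ) : ℕ := y s - if s ∈ Icc u v then 1 else 0

section Window

variable {T u v : ℕ} {y : ℕ → ℕ}

theorem raiseOn_lowerOn (hy : ∀ s ∈ Icc u v, 0 < y s) : raiseOn u v (lowerOn u v y) = y := by
  funext s
  by_cases hs : s ∈ Icc u v
  · have := hy s hs
    simp only [raiseOn, lowerOn, hs, if_true]
    omega
  · simp [raiseOn, lowerOn, hs]

theorem sum_raiseOn (hW : Icc u v ⊆ Icc 1 T) :
    ∑ s ∈ Icc 1 T, raiseOn u v y s = ∑ s ∈ Icc 1 T, y s + (v + 1 - u) := by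
  simp only [raiseOn, sum_add_distrib, sum_ite_mem, inter_eq_right.2 hW, sum_const, Nat.card_Icc,
    smul_eq_mul, mul_one]

theorem raiseOn_sub_raiseOn (hu : 1 ≤ u) (huv : u ≤ v) (s : ℕ) :
    raiseOn u v y s - raiseOn u v y (s - 1)
        + (if s = v + 1 then (if y v < y (v + 1) then 1 else 0) else 0)
      = y s - y (s - 1) + (if s = u then (if y (u - 1) ≤ y u then 1 else 0) else 0) := by
  simp only [raiseOn, mem_Icc]
  obtain rfl | hsu := eq_or_ne s u
  · split_ifs <;> omega
  obtain rfl | hsv := eq_or_ne s (v + 1)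
  · simp only [Nat.add_sub_cancel]
    split_ifs <;> omega
  · split_ifs <;> omega

theorem powerUps_raiseOn (hu : 1 ≤ u) (huv : u ≤ v) (hvT : v ≤ T) :
    powerUps T (raiseOn u v y) + (if v < T ∧ y v < y (v + 1) then 1 else 0)
      = powerUps T y + (if y (u - 1) ≤ y u then 1 else 0) := by
  have := sum_congr rfl fun s (_ : s ∈ Icc 1 T) => raiseOn_sub_raiseOn (y := y) hu huv s
  simp only [sum_add_distrib, sum_ite_eq', mem_Icc] at this
  simp only [powerUps]
  convert this using 2
  · by_cases h : v < T <;> simp [h]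
  · simp [hu, huv.trans hvT]

theorem colCost_raiseOn (c b : ℝ) (hu : 1 ≤ u) (huv : u ≤ v) (hvT : v ≤ T) :
    colCost T c b (raiseOn u v y) = colCost T c b y + c * (v + 1 - u : ℕ)
      + b * ((if y (u - 1) ≤ y u then 1 else 0) - (if v < T ∧ y v < y (v + 1) then 1 else 0)) := by
  have hups := congrArg (Nat.cast (R := ℝ)) (powerUps_raiseOn (y := y) hu huv hvT)
  have hW : Icc u v ⊆ Icc 1 T := Icc_subset_Icc hu hvT
  have hsum := congrArg (Nat.cast (R := ℝ)) (sum_raiseOn (y := y) hW)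
  push_cast at hups hsum
  simp only [colCost, hsum]
  linear_combination b * hups

theorem colCost_lowerOn (c b : ℝ) (hu : 1 ≤ u) (huv : u ≤ v) (hvT : v ≤ T)
    (hy : ∀ s ∈ Icc u v, 0 < y s) :
    colCost T c b (lowerOn u v y) = colCost T c b y - c * (v + 1 - u : ℕ)
      - b * ((if y (u - 1) < y u then 1 else 0) - (if v < T ∧ y v ≤ y (v + 1) then 1 else 0)) := by
  have hraise := colCost_raiseOn (y := lowerOn u v y) c b hu huv hvT
  have hyu := hy u (mem_Icc.2 ⟨le_rfl, huv⟩)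
  have hyv := hy v (mem_Icc.2 ⟨huv, le_rfl⟩)
  have hstart : lowerOn u v y (u - 1) ≤ lowerOn u v y u ↔ y (u - 1) < y u := by
    simp only [lowerOn, mem_Icc]; split_ifs <;> omega
  have hend : lowerOn u v y v < lowerOn u v y (v + 1) ↔ y v ≤ y (v + 1) := by
    simp only [lowerOn, mem_Icc]; split_ifs <;> omega
  simp only [raiseOn_lowerOn hy, hstart, hend] at hraise
  linarith

end Window

theorem Feasible.le_cap {T d : ℕ} {m lam : ℕ → ℕ} {x : ℕ → ℕ → ℕ} (hx : Feasible T d m lam x)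
    (t j : ℕ) : x t j ≤ m j := by
  obtain ⟨h0, hT, hcap⟩ := hx
  rcases Nat.eq_zero_or_pos t with rfl | ht
  · simp [h0]
  rcases le_or_gt t T with htT | htT
  · exact (hcap t (mem_Icc.2 ⟨ht, htT⟩)).2 j
  · simp [hT t htT]

def moveServer (x : ℕ → ℕ → ℕ) (j₁ j₀ u v : ℕ) (s j : ℕ) : ℕ :=
  if j = j₀ then raiseOn u v (fun t => x t j₀) s
  else if j = j₁ then lowerOn u v (fun t => x t j₁) s else x s j

section MoveServer

variable {T d : ℕ} {m lam : ℕ → ℕ} {x : ℕ → ℕ → ℕ} {j₁ j₀ u v : ℕ}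

theorem moveServer_of_notMem {s : ℕ} (hs : s ∉ Icc u v) (j : ℕ) :
    moveServer x j₁ j₀ u v s j = x s j := by
  simp only [moveServer, raiseOn, lowerOn, hs, if_false, add_zero, Nat.sub_zero]
  split_ifs <;> subst_vars <;> rfl

theorem sum_moveServer {M : Type*} [AddCommGroup M] (F : ℕ → (ℕ → ℕ) → M) {S : Finset ℕ}
    (h₀ : j₀ ∈ S) (h₁ : j₁ ∈ S) (hne : j₁ ≠ j₀) :
    ∑ j ∈ S, F j (fun s => moveServer x j₁ j₀ u v s j)
      = ∑ j ∈ S, F j (fun s => x s j)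
        + (F j₀ (raiseOn u v fun s => x s j₀) - F j₀ fun s => x s j₀)
        + (F j₁ (lowerOn u v fun s => x s j₁) - F j₁ fun s => x s j₁) := by
  have hcol : ∀ j, F j (fun s => moveServer x j₁ j₀ u v s j) = F j (fun s => x s j)
      + (if j = j₀ then F j₀ (raiseOn u v fun s => x s j₀) - F j₀ fun s => x s j₀ else 0)
      + (if j = j₁ then F j₁ (lowerOn u v fun s => x s j₁) - F j₁ fun s => x s j₁ else 0) := by
    intro j
    obtain rfl | h0 := eq_or_ne j j₀
    · simp [moveServer, hne.symm]
    obtain rfl | h1 := eq_or_ne j j₁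
    · simp [moveServer, h0]
    · simp [moveServer, h0, h1]
  simp only [hcol, sum_add_distrib, sum_ite_eq', h₀, h₁, if_true]

theorem feasible_moveServer (hx : Feasible T d m lam x) (h₀ : j₀ ∈ Icc 1 d) (h₁ : j₁ ∈ Icc 1 d)
    (hne : j₁ ≠ j₀) (hu : 1 ≤ u) (hvT : v ≤ T)
    (hwin : ∀ s ∈ Icc u v, 0 < x s j₁ ∧ x s j₀ < m j₀) :
    Feasible T d m lam (moveServer x j₁ j₀ u v) := by
  have hout : ∀ s, (s = 0 ∨ T < s) → ∀ j, moveServer x j₁ j₀ u v s j = x s j := fun s hs =>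
    moveServer_of_notMem (by simp only [mem_Icc]; omega)
  refine ⟨fun j => ?_, fun s hs j => ?_, fun s hs => ⟨?_, fun j => ?_⟩⟩
  · rw [hout 0 (.inl rfl), hx.1]
  · rw [hout s (.inr hs), hx.2.1 s hs]
  · have hsum : ∑ j ∈ Icc 1 d, (moveServer x j₁ j₀ u v s j : ℤ) = ∑ j ∈ Icc 1 d, (x s j : ℤ) := by
      rw [sum_moveServer (fun j y => (y s : ℤ)) h₀ h₁ hne]
      by_cases hW : s ∈ Icc u v
      · simp [raiseOn, lowerOn, hW, Nat.cast_sub (hwin s hW).1]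
      · simp [raiseOn, lowerOn, hW]
    exact (hx.2.2 s hs).1.trans (by exact_mod_cast hsum.ge)
  · by_cases hW : s ∈ Icc u v
    · obtain rfl | h0 := eq_or_ne j j₀
      · simpa [moveServer, raiseOn, hW] using (hwin s hW).2
      obtain rfl | h1 := eq_or_ne j j₁
      · simp only [moveServer, lowerOn, h0, hW, if_true, if_false]
        exact (Nat.sub_le _ _).trans (hx.le_cap s j)
      · simp only [moveServer, h0, h1, if_false]
        exact hx.le_cap s j
    · rw [moveServer_of_notMem hW]
      exact hx.le_cap s j

/-- The four indicators record an extra power-up of `j₀` at `u`, a power-up of `j₀` saved at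
`v + 1`, a power-up of `j₁` saved at `u`, and an extra power-up of `j₁` at `v + 1`. -/
theorem cost_moveServer (β l : ℕ → ℝ) (h₀ : j₀ ∈ Icc 1 d) (h₁ : j₁ ∈ Icc 1 d) (hne : j₁ ≠ j₀)
    (hu : 1 ≤ u) (huv : u ≤ v) (hvT : v ≤ T) (hrun : ∀ s ∈ Icc u v, 0 < x s j₁) :
    cost T d β l (moveServer x j₁ j₀ u v) = cost T d β l x + (v + 1 - u : ℕ) * (l j₀ - l j₁)
      + β j₀ * ((if x (u - 1) j₀ ≤ x u j₀ then 1 else 0)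
        - (if v < T ∧ x v j₀ < x (v + 1) j₀ then 1 else 0))
      - β j₁ * ((if x (u - 1) j₁ < x u j₁ then 1 else 0)
        - (if v < T ∧ x v j₁ ≤ x (v + 1) j₁ then 1 else 0)) := by
  rw [cost_eq_sum_colCost, cost_eq_sum_colCost,
    sum_moveServer (fun j y => colCost T (l j) (β j) y) h₀ h₁ hne,
    colCost_raiseOn _ _ hu huv hvT, colCost_lowerOn _ _ hu huv hvT hrun]
  ring

end MoveServer

theorem exists_maximal_window {G : ℕ → Prop} {t T : ℕ} (htT : t ≤ T) (ht : G t) :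
    ∃ v, t ≤ v ∧ v ≤ T ∧ (∀ s ∈ Icc t v, G s) ∧ (v < T → ¬G (v + 1)) := by
  classical
  let P := fun w => ∀ s ∈ Icc t w, G s
  have hPt : P t := fun s hs => by rw [Icc_self, mem_singleton] at hs; exact hs ▸ ht
  refine ⟨Nat.findGreatest P T, Nat.le_findGreatest htT hPt, Nat.findGreatest_le T,
    Nat.findGreatest_spec htT hPt, fun hlt hG => Nat.findGreatest_is_greatest (Nat.lt_succ_self _)
      hlt ?_⟩
  intro s hs
  rcases (mem_Icc.1 hs).2.eq_or_lt with rfl | hlt'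
  · exact hG
  · exact Nat.findGreatest_spec htT hPt s (mem_Icc.2 ⟨(mem_Icc.1 hs).1, Nat.lt_succ_iff.1 hlt'⟩)

theorem exists_minimal_window {G : ℕ → Prop} {t : ℕ} (ht1 : 1 ≤ t) (ht : G t) :
    ∃ u, 1 ≤ u ∧ u ≤ t ∧ (∀ s ∈ Icc u t, G s) ∧ (1 < u → ¬G (u - 1)) := by
  classical
  have hPt : 1 ≤ t ∧ ∀ s ∈ Icc t t, G s :=
    ⟨ht1, fun s hs => by rw [Icc_self, mem_singleton] at hs; exact hs ▸ ht⟩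
  have hex : ∃ u, 1 ≤ u ∧ ∀ s ∈ Icc u t, G s := ⟨t, hPt⟩
  obtain ⟨hu1, hwin⟩ := Nat.find_spec hex
  refine ⟨Nat.find hex, hu1, Nat.find_min' hex hPt, hwin, fun hgt hG =>
    Nat.find_min hex (Nat.sub_one_lt_of_lt hgt) ⟨by omega, fun s hs => ?_⟩⟩
  rcases eq_or_lt_of_le (mem_Icc.1 hs).1 with rfl | hlt
  · exact hG
  · exact hwin s (mem_Icc.2 ⟨by omega, (mem_Icc.1 hs).2⟩)

section Optimal

variable {T d : ℕ} {m lam : ℕ → ℕ} {β l : ℕ → ℝ} {x : ℕ → ℕ → ℕ} {j₁ j₀ : ℕ}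

theorem Optimal.operating_saving_le {u v : ℕ} (hopt : Optimal T d m lam β l x)
    (h₀ : j₀ ∈ Icc 1 d) (h₁ : j₁ ∈ Icc 1 d) (hne : j₁ ≠ j₀) (hu : 1 ≤ u) (huv : u ≤ v)
    (hvT : v ≤ T) (hwin : ∀ s ∈ Icc u v, 0 < x s j₁ ∧ x s j₀ < m j₀) :
    (v + 1 - u : ℕ) * (l j₁ - l j₀)
      ≤ β j₀ * ((if x (u - 1) j₀ ≤ x u j₀ then 1 else 0)
          - (if v < T ∧ x v j₀ < x (v + 1) j₀ then 1 else 0))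
        - β j₁ * ((if x (u - 1) j₁ < x u j₁ then 1 else 0)
          - (if v < T ∧ x v j₁ ≤ x (v + 1) j₁ then 1 else 0)) := by
  have hle := hopt.2 _ (feasible_moveServer hopt.1 h₀ h₁ hne hu hvT hwin)
  rw [cost_moveServer β l h₀ h₁ hne hu huv hvT fun s hs => (hwin s hs).1] at hle
  linarith

theorem Optimal.not_powerDown_while_running (hopt : Optimal T d m lam β l x)
    (h₀ : j₀ ∈ Icc 1 d) (h₁ : j₁ ∈ Icc 1 d) (hl : l j₀ < l j₁) (hβ : β j₁ ≤ β j₀)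
    (hβ₁ : 0 ≤ β j₁) {t : ℕ} (ht : t ∈ Icc 1 T) (hdown : x t j₀ < x (t - 1) j₀)
    (hrun : 0 < x t j₁) : False := by
  have hne : j₁ ≠ j₀ := by rintro rfl; exact hl.false
  obtain ⟨v, htv, hvT, hwin, hmax⟩ :=
    exists_maximal_window (G := fun s => 0 < x s j₁ ∧ x s j₀ < m j₀) (mem_Icc.1 ht).2
      ⟨hrun, hdown.trans_le (hopt.1.le_cap _ _)⟩
  have hsave := hopt.operating_saving_le h₀ h₁ hne (mem_Icc.1 ht).1 htv hvT hwin
  have hlen : (1 : ℝ) ≤ (v + 1 - t : ℕ) := by exact_mod_cast (by omega : 1 ≤ v + 1 - t)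
  have hpos : 0 < ((v + 1 - t : ℕ) : ℝ) * (l j₁ - l j₀) := by nlinarith
  have hend : v < T ∧ x v j₁ ≤ x (v + 1) j₁ → v < T ∧ x v j₀ < x (v + 1) j₀ := by
    rintro ⟨hvT', hle⟩
    have := hmax hvT'
    have := hwin v (mem_Icc.2 ⟨htv, le_rfl⟩)
    exact ⟨hvT', by simp only [not_and_or, not_lt] at *; omega⟩
  rw [if_neg (by omega : ¬x (t - 1) j₀ ≤ x t j₀)] at hsave
  split_ifs at hsave <;> first | linarith | tauto

theorem Optimal.not_powerUp_after_running (hopt : Optimal T d m lam β l x)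
    (h₀ : j₀ ∈ Icc 1 d) (h₁ : j₁ ∈ Icc 1 d) (hl : l j₀ < l j₁) (hβ : β j₁ ≤ β j₀)
    (hβ₁ : 0 ≤ β j₁) {t : ℕ} (ht : t ∈ Icc 1 T) (hup : x (t - 1) j₀ < x t j₀)
    (hrun : 0 < x (t - 1) j₁) : False := by
  have hne : j₁ ≠ j₀ := by rintro rfl; exact hl.false
  obtain ⟨ht1, htT⟩ := mem_Icc.1 ht
  have hx0 : ∀ j, x 0 j = 0 := hopt.1.1
  have ht2 : 1 ≤ t - 1 := by
    by_contra
    rw [show t - 1 = 0 by omega, hx0] at hrun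
    exact hrun.false
  obtain ⟨u, hu1, hut, hwin, hmin⟩ :=
    exists_minimal_window (G := fun s => 0 < x s j₁ ∧ x s j₀ < m j₀) ht2
      ⟨hrun, hup.trans_le (hopt.1.le_cap _ _)⟩
  have hsave := hopt.operating_saving_le h₀ h₁ hne hu1 hut (by omega) hwin
  have hlen : (1 : ℝ) ≤ (t - 1 + 1 - u : ℕ) := by exact_mod_cast (by omega : 1 ≤ t - 1 + 1 - u)
  have hpos : 0 < ((t - 1 + 1 - u : ℕ) : ℝ) * (l j₁ - l j₀) := by nlinarith
  have hstart : ¬x (u - 1) j₁ < x u j₁ → ¬x (u - 1) j₀ ≤ x u j₀ := by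
    intro hle
    have := hwin u (mem_Icc.2 ⟨le_rfl, hut⟩)
    have hu : 1 < u := by
      by_contra h
      rw [show u - 1 = 0 by omega, hx0] at hle
      omega
    have := hmin hu
    simp only [not_and_or, not_lt] at *
    omega
  have hend : t - 1 < T ∧ x (t - 1) j₀ < x (t - 1 + 1) j₀ := by
    rw [Nat.sub_add_cancel ht1]; exact ⟨by omega, hup⟩
  rw [if_pos hend] at hsave
  split_ifs at hsave <;> first | linarith | tauto

end Optimal

section Lane

variable {d : ℕ} {x : ℕ → ℕ → ℕ} {k : ℕ}

theorem le_lane {t j : ℕ} (hj : j ∈ Icc 1 d) (hk : k ≤ ∑ i ∈ Icc j d, x t i) : j ≤ lane d x t k :=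
  le_csSup ⟨d, fun _ hi => (mem_Icc.1 hi.1).2⟩ ⟨hj, hk⟩

theorem lane_mem {t : ℕ} (h : 0 < lane d x t k) :
    lane d x t k ∈ Icc 1 d ∧ k ≤ ∑ i ∈ Icc (lane d x t k) d, x t i := by
  refine Nat.sSup_mem (s := {j | j ∈ Icc 1 d ∧ k ≤ ∑ i ∈ Icc j d, x t i}) ?_
    ⟨d, fun _ hi => (mem_Icc.1 hi.1).2⟩
  by_contra hempty
  rw [Set.not_nonempty_iff_eq_empty] at hempty
  rw [lane, hempty, csSup_empty] at h
  exact h.false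

theorem exists_types_of_lane_lt {s s' : ℕ} (hs : 0 < lane d x s k)
    (hlt : lane d x s k < lane d x s' k) :
    ∃ j₁ j₀, 1 ≤ j₁ ∧ j₁ < j₀ ∧ j₀ ≤ d ∧ 0 < x s j₁ ∧ x s j₀ < x s' j₀ := by
  obtain ⟨ha, hka⟩ := lane_mem hs
  obtain ⟨hb, hkb⟩ := lane_mem (hs.trans hlt)
  set a := lane d x s k
  set b := lane d x s' k
  have hbelow : ∑ i ∈ Icc b d, x s i < k := by
    by_contra h
    exact (le_lane hb (not_lt.1 h)).not_gt hlt
  obtain ⟨j₀, hj₀, hmore⟩ := exists_lt_of_sum_lt (hbelow.trans_le hkb)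
  have hrun : ∃ j₁ ∈ Ico a b, 0 < x s j₁ := by
    by_contra! hoff
    have hsame : ∑ i ∈ Icc b d, x s i = ∑ i ∈ Icc a d, x s i := by
      refine sum_subset (Icc_subset_Icc_left hlt.le) fun i hi hib => ?_
      simp only [mem_Icc, not_and_or, not_le] at hi hib
      exact Nat.le_zero.1 (hoff i (mem_Ico.2 ⟨hi.1, by omega⟩))
    omega
  obtain ⟨j₁, hj₁, hpos⟩ := hrun
  simp only [mem_Icc, mem_Ico] at ha hj₀ hj₁
  exact ⟨j₁, j₀, by omega, by omega, hj₀.2, hpos, hmore⟩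

end Lane

theorem no_immediate_server_change_general (T d : ℕ) (m lam : ℕ → ℕ) (β l : ℕ → ℝ)
    (hl : ∀ j j', 1 ≤ j → j < j' → j' ≤ d → l j' < l j)
    (hβ : ∀ j j', 1 ≤ j → j < j' → j' ≤ d → β j < β j')
    (hβ0 : ∀ j, 1 ≤ j → j ≤ d → 0 < β j)
    (x : ℕ → ℕ → ℕ) (hopt : Optimal T d m lam β l x)
    (t k : ℕ) (ht1 : 1 ≤ t) (htT : t ≤ T)
    (h1 : 0 < lane d x (t - 1) k) (h2 : 0 < lane d x t k) :
    lane d x (t - 1) k = lane d x t k := by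
  by_contra hne
  rcases lt_or_gt_of_ne hne with hlt | hgt
  · obtain ⟨j₁, j₀, hj₁, hj, hj₀, hrun, hup⟩ := exists_types_of_lane_lt h1 hlt
    exact hopt.not_powerUp_after_running (mem_Icc.2 ⟨by omega, hj₀⟩) (mem_Icc.2 ⟨hj₁, by omega⟩)
      (hl j₁ j₀ hj₁ hj hj₀) (hβ j₁ j₀ hj₁ hj hj₀).le (hβ0 j₁ hj₁ (by omega)).le
      (mem_Icc.2 ⟨ht1, htT⟩) hup hrun
  · obtain ⟨j₁, j₀, hj₁, hj, hj₀, hrun, hdown⟩ := exists_types_of_lane_lt h2 hgt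
    exact hopt.not_powerDown_while_running (mem_Icc.2 ⟨by omega, hj₀⟩) (mem_Icc.2 ⟨hj₁, by omega⟩)
      (hl j₁ j₀ hj₁ hj hj₀) (hβ j₁ j₀ hj₁ hj hj₀).le (hβ0 j₁ hj₁ (by omega)).le
      (mem_Icc.2 ⟨ht1, htT⟩) hdown hrun

/-- In an optimal schedule, server types in a lane never change
immediately: if `lane (t-1) k > 0` and `lane t k > 0` then they are equal. -/
theorem no_immediate_server_change (T d : ℕ) (m lam : ℕ → ℕ) (β l : ℕ → ℝ)
    (hl : ∀ j j', 1 ≤ j → j < j' → j' ≤ d → l j' < l j)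
    (hl0 : ∀ j, 1 ≤ j → j ≤ d → 0 ≤ l j)
    (hβ : ∀ j j', 1 ≤ j → j < j' → j' ≤ d → β j < β j')
    (hβ0 : ∀ j, 1 ≤ j → j ≤ d → 0 < β j)
    (x : ℕ → ℕ → ℕ) (hopt : Optimal T d m lam β l x)
    (t k : ℕ) (ht1 : 1 ≤ t) (htT : t ≤ T)
    (h1 : 0 < lane d x (t - 1) k) (h2 : 0 < lane d x t k) :
    lane d x (t - 1) k = lane d x t k :=
  no_immediate_server_change_general T d m lam β l hl hβ hβ0 x hopt t k ht1 htT h1 h2
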